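/- (Spatial difference bound) Let t > 0, u(t,·) Schwartz, φ(t,x) = x²/(4t), and γ(t,v) = ∫ u(t,x) e^{−iφ(t,x)} conj(χ((x−vt)/√t)) dx with χ Schwartz, ∫χ = 1. Then sup_v |u(t,vt) − t^{−1/2} e^{iφ(t,vt)} γ(t,v)| ≤ C t^{−3/4} ‖Lu(t)‖_{L²_x}, where Lu = xu + 2it∂ₓu. -/

import Mathlib

open Complex MeasureTheory

/-- The asymptotic profile `γ(t,v) = ∫ u(x) e^{−ix²/(4t)} conj(χ((x−vt)/√t)) dx`. -/
noncomputable def asymProfile (χ : SchwartzMap ℝ ℂ) (u : ℝ → ℂ) (t v : ℝ) : ℂ :=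
  ∫ x : ℝ, u x * Complex.exp (-I * (x : ℂ) ^ 2 / (4 * (t : ℂ))) *
    (starRingEnd ℂ) (χ ((x - v * t) / Real.sqrt t))

/-!
Multiplying by the chirp `e^{-iφ(t,x)}` conjugates `L` to a derivative:
`∂ₓ(u e^{-iφ}) = (2it)⁻¹ (Lu) e^{-iφ}`. By Cauchy–Schwarz, `g = u e^{-iφ}` is therefore
½-Hölder with constant `(2t)⁻¹ ‖Lu‖₂`. Up to the unimodular factor `e^{iφ(t,vt)}`, the quantity
to bound is `g(vt)` minus the average of `g` against `conj χ` rescaled to width `√t` around `vt`;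
as `∫ χ = 1` this is `∫ (g(vt) - g(vt + √t y)) conj χ(y) dy`, which is at most
`(2t)⁻¹ ‖Lu‖₂ · t^{1/4} ∫ |y|^{1/2} |χ y| dy`.
-/

open scoped ComplexConjugate

theorem setIntegral_le_sqrt_measureReal_mul_sqrt_integral_sq {α : Type*} [MeasurableSpace α]
    {μ : Measure α} {s : Set α} (hs : μ s ≠ ⊤) {h : α → ℝ} (h0 : 0 ≤ h)
    (hm : AEStronglyMeasurable h μ) (hsq : Integrable (fun x => h x ^ 2) μ) :
    ∫ x in s, h x ∂μ ≤ √(μ.real s) * √(∫ x, h x ^ 2 ∂μ) := by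
  have : Fact (μ s < ⊤) := ⟨hs.lt_top⟩
  have hL2 : MemLp h (ENNReal.ofReal 2) (μ.restrict s) := by
    simpa using (memLp_two_iff_integrable_sq hm.restrict).2 hsq.restrict
  have hCS := integral_mul_le_Lp_mul_Lq_of_nonneg (g := fun _ => (1 : ℝ))
    Real.HolderConjugate.two_two (Filter.Eventually.of_forall fun x => h0 x)
    (Filter.Eventually.of_forall fun _ => zero_le_one) hL2 (memLp_const 1)
  simp only [mul_one, one_pow, setIntegral_const, smul_eq_mul, Real.rpow_two] at hCS
  rw [mul_comm, Real.sqrt_eq_rpow, Real.sqrt_eq_rpow]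
  refine hCS.trans (mul_le_mul_of_nonneg_right ?_ (Real.rpow_nonneg measureReal_nonneg _))
  exact Real.rpow_le_rpow (integral_nonneg fun x => sq_nonneg _)
    (setIntegral_le_integral hsq (Filter.Eventually.of_forall fun x => sq_nonneg _)) (by norm_num)

theorem integral_comp_sub_div {E : Type*} [NormedAddCommGroup E] [NormedSpace ℝ E]
    (f : ℝ → E) (x₀ s : ℝ) : ∫ x, f ((x - x₀) / s) = |s| • ∫ y, f y := by
  rw [integral_sub_right_eq_self (fun x => f (x / s)) x₀, Measure.integral_comp_div]

theorem SchwartzMap.integrable_sqrt_abs_mul_norm (χ : SchwartzMap ℝ ℂ) :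
    Integrable fun y : ℝ => √|y| * ‖χ y‖ := by
  refine (χ.integrable.norm.add (χ.integrable_pow_mul volume 1)).mono'
    ((Real.continuous_sqrt.comp continuous_abs).mul χ.continuous.norm).aestronglyMeasurable
    (Filter.Eventually.of_forall fun y => ?_)
  have hsqrt : √|y| ≤ 1 + |y| := by
    nlinarith [Real.sq_sqrt (abs_nonneg y), Real.sqrt_nonneg |y|, sq_nonneg (√|y| - 1)]
  simp only [Pi.add_apply, Real.norm_eq_abs, pow_one,
    abs_of_nonneg (by positivity : 0 ≤ √|y| * ‖χ y‖)]
  nlinarith [norm_nonneg (χ y)]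

theorem norm_sub_mollification_le_of_sqrt_holder {g ψ : ℝ → ℂ} {A s : ℝ} (x₀ : ℝ) (hs : 0 < s)
    (hg : Continuous g) (hgA : ∀ a b, ‖g b - g a‖ ≤ A * √|b - a|) (hψ : Integrable ψ)
    (hψK : Integrable fun y => √|y| * ‖ψ y‖) (hψ1 : ∫ y, ψ y = 1) :
    ‖g x₀ - s⁻¹ • ∫ x, g x * ψ ((x - x₀) / s)‖ ≤ A * √s * ∫ y, √|y| * ‖ψ y‖ := by
  have hrescale : s⁻¹ • ∫ x, g x * ψ ((x - x₀) / s) = ∫ y, g (x₀ + s * y) * ψ y := by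
    have := integral_comp_sub_div (fun y => g (x₀ + s * y) * ψ y) x₀ s
    rw [abs_of_pos hs] at this
    simp only [mul_div_cancel₀ _ hs.ne', add_sub_cancel] at this
    rw [this, inv_smul_smul₀ hs.ne']
  have hbound : ∀ y, ‖(g x₀ - g (x₀ + s * y)) * ψ y‖ ≤ A * √s * (√|y| * ‖ψ y‖) := by
    intro y
    have hy := hgA (x₀ + s * y) x₀
    rw [show x₀ - (x₀ + s * y) = -(s * y) by ring, abs_neg, abs_mul, abs_of_pos hs,
      Real.sqrt_mul hs.le] at hy
    rw [norm_mul]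
    calc ‖g x₀ - g (x₀ + s * y)‖ * ‖ψ y‖ ≤ A * (√s * √|y|) * ‖ψ y‖ := by gcongr
      _ = A * √s * (√|y| * ‖ψ y‖) := by ring
  have hdiff : Integrable fun y => (g x₀ - g (x₀ + s * y)) * ψ y :=
    (hψK.const_mul _).mono'
      ((continuous_const.sub (hg.comp (by fun_prop))).aestronglyMeasurable.mul hψ.1)
      (Filter.Eventually.of_forall hbound)
  have hcentred : g x₀ - ∫ y, g (x₀ + s * y) * ψ y = ∫ y, (g x₀ - g (x₀ + s * y)) * ψ y := by
    have hshift : Integrable fun y => g (x₀ + s * y) * ψ y :=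
      ((hψ.const_mul (g x₀)).sub hdiff).congr
        (Filter.Eventually.of_forall fun y => by simp only [Pi.sub_apply]; ring)
    simp only [sub_mul]
    rw [integral_sub (hψ.const_mul _) hshift, integral_const_mul, hψ1, mul_one]
  rw [hrescale, hcentred, ← integral_const_mul]
  exact norm_integral_le_of_norm_le (hψK.const_mul _) (Filter.Eventually.of_forall hbound)

theorem inv_two_mul_mul_sqrt_sqrt {t : ℝ} (ht : 0 < t) :
    (2 * t)⁻¹ * √√t = t ^ (-(3 / 4 : ℝ)) / 2 := by
  have h34 : t ^ (-(3 / 4 : ℝ)) = t⁻¹ * t ^ ((1 : ℝ) / 2 * (1 / 2)) := by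
    rw [← Real.rpow_neg_one, ← Real.rpow_add ht]; norm_num
  rw [Real.sqrt_eq_rpow, Real.sqrt_eq_rpow, ← Real.rpow_mul ht.le, h34]
  ring

noncomputable def chirp (t x : ℝ) : ℂ := Complex.exp (-I * (x : ℂ) ^ 2 / (4 * (t : ℂ)))

theorem norm_chirp (t x : ℝ) : ‖chirp t x‖ = 1 := by
  have : -I * (x : ℂ) ^ 2 / (4 * (t : ℂ)) = ((-(x ^ 2 / (4 * t)) : ℝ) : ℂ) * I := by
    push_cast; ring
  rw [chirp, this, Complex.norm_exp_ofReal_mul_I]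

theorem continuous_chirp (t : ℝ) : Continuous (chirp t) := by
  unfold chirp; fun_prop

theorem hasDerivAt_chirp {t : ℝ} (x : ℝ) :
    HasDerivAt (chirp t) (-I * x / (2 * t) * chirp t x) x := by
  have h := ((hasDerivAt_pow 2 (x : ℂ)).const_mul (-I / (4 * (t : ℂ)))).cexp.comp_ofReal
  convert h using 1
  · ext y; simp only [chirp]; ring_nf
  · simp only [chirp]; push_cast; ring_nf

theorem exp_mul_chirp (t x : ℝ) :
    Complex.exp (I * (x : ℂ) ^ 2 / (4 * (t : ℂ))) * chirp t x = 1 := by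
  rw [chirp, ← Complex.exp_add, ← add_div, neg_mul, add_neg_cancel, zero_div, Complex.exp_zero]

theorem norm_exp_I_mul_sq_div (t x : ℝ) : ‖Complex.exp (I * (x : ℂ) ^ 2 / (4 * (t : ℂ)))‖ = 1 := by
  simpa only [norm_mul, norm_chirp, mul_one, norm_one] using congrArg norm (exp_mul_chirp t x)

/-- The operator `L = x + 2it∂ₓ`. -/
noncomputable def galileanOp (t : ℝ) : SchwartzMap ℝ ℂ →L[ℂ] SchwartzMap ℝ ℂ :=
  SchwartzMap.smulLeftCLM ℂ (fun x : ℝ => (x : ℂ)) + (2 * I * t) • SchwartzMap.derivCLM ℂ ℂ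

theorem galileanOp_apply (t : ℝ) (u : SchwartzMap ℝ ℂ) (x : ℝ) :
    galileanOp t u x = x * u x + 2 * I * t * deriv u x := by
  simp [galileanOp, SchwartzMap.smulLeftCLM_apply_apply Function.Complex.hasTemperateGrowth_ofReal]

theorem hasDerivAt_mul_chirp {t : ℝ} (ht : t ≠ 0) (u : SchwartzMap ℝ ℂ) (x : ℝ) :
    HasDerivAt (fun y => u y * chirp t y) ((2 * I * t)⁻¹ * galileanOp t u x * chirp t x) x := by
  refine ((u.hasDerivAt x).mul (hasDerivAt_chirp x)).congr_deriv ?_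
  have : (t : ℂ) ≠ 0 := by exact_mod_cast ht
  rw [galileanOp_apply]
  field_simp
  linear_combination (-(x : ℂ) * u x * chirp t x) * Complex.I_sq

open scoped Interval in
theorem norm_mul_chirp_sub_le {t : ℝ} (ht : 0 < t) (u : SchwartzMap ℝ ℂ) (a b : ℝ) :
    ‖u b * chirp t b - u a * chirp t a‖ ≤
      (2 * t)⁻¹ * √(∫ x, ‖galileanOp t u x‖ ^ 2) * √|b - a| := by
  set Lu := galileanOp t u
  have hLu2 : Integrable fun x => ‖Lu x‖ ^ 2 := (Lu.memLp 2).integrable_norm_pow two_ne_zero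
  have hderiv_norm : ∀ x, ‖(2 * I * t)⁻¹ * Lu x * chirp t x‖ = (2 * t)⁻¹ * ‖Lu x‖ := by
    intro x
    simp [norm_chirp, abs_of_pos ht]
  have hftc : ∫ x in a..b, (2 * I * t)⁻¹ * Lu x * chirp t x = u b * chirp t b - u a * chirp t a :=
    intervalIntegral.integral_eq_sub_of_hasDerivAt (fun x _ => hasDerivAt_mul_chirp ht.ne' u x)
      (((continuous_const.mul Lu.continuous).mul (continuous_chirp t)).intervalIntegrable a b)
  calc ‖u b * chirp t b - u a * chirp t a‖
      ≤ ∫ x in Ι a b, ‖(2 * I * t)⁻¹ * Lu x * chirp t x‖ :=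
        hftc ▸ intervalIntegral.norm_integral_le_integral_norm_uIoc
    _ = (2 * t)⁻¹ * ∫ x in Ι a b, ‖Lu x‖ := by simp only [hderiv_norm, integral_const_mul]
    _ ≤ (2 * t)⁻¹ * (√|b - a| * √(∫ x, ‖Lu x‖ ^ 2)) := by
        gcongr
        simpa [measureReal_def, Real.volume_uIoc] using
          setIntegral_le_sqrt_measureReal_mul_sqrt_integral_sq (s := Ι a b)
            measure_Ioc_lt_top.ne (fun x => norm_nonneg (Lu x))
            Lu.continuous.norm.aestronglyMeasurable hLu2
    _ = (2 * t)⁻¹ * √(∫ x, ‖Lu x‖ ^ 2) * √|b - a| := by ring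

theorem sub_rpow_mul_asymProfile_eq (χ : SchwartzMap ℝ ℂ) (u : ℝ → ℂ) {t : ℝ} (ht : 0 < t)
    (v : ℝ) :
    u (v * t) - ((t ^ (-(1 / 2 : ℝ)) : ℝ) : ℂ) *
        Complex.exp (I * ((v * t : ℝ) : ℂ) ^ 2 / (4 * (t : ℂ))) * asymProfile χ u t v =
      Complex.exp (I * ((v * t : ℝ) : ℂ) ^ 2 / (4 * (t : ℂ))) * (u (v * t) * chirp t (v * t) -
        (√t)⁻¹ • ∫ x, u x * chirp t x * conj (χ ((x - v * t) / √t))) := by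
  have hprofile : asymProfile χ u t v = ∫ x, u x * chirp t x * conj (χ ((x - v * t) / √t)) := rfl
  rw [hprofile, Real.rpow_neg ht.le, ← Real.sqrt_eq_rpow, Complex.real_smul]
  linear_combination -(u (v * t)) * exp_mul_chirp t (v * t)

/-- Spatial difference bound:
`sup_v |u(vt) − t^{−1/2} e^{iφ(t,vt)} γ(t,v)| ≤ C t^{−3/4} ‖Lu‖_{L²}`,
where `φ(t,x) = x²/(4t)` and `Lu = xu + 2it∂ₓu`, `C` depending only on `χ`. -/
theorem spatial_difference_bound (χ : SchwartzMap ℝ ℂ) (hχ : (∫ y : ℝ, χ y) = 1) :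
    ∃ C : ℝ, 0 < C ∧ ∀ (t : ℝ), 0 < t → ∀ u : SchwartzMap ℝ ℂ, ∀ v : ℝ,
      ‖u (v * t) - ((t : ℝ) ^ (-(1 / 2 : ℝ)) : ℝ) *
          Complex.exp (I * ((v * t : ℝ) : ℂ) ^ 2 / (4 * (t : ℂ))) *
          asymProfile χ (fun x => u x) t v‖ ≤
        C * t ^ (-(3 / 4 : ℝ)) *
          (∫ x : ℝ, ‖(x : ℂ) * u x + 2 * I * (t : ℂ) * deriv u x‖ ^ 2) ^ ((1 : ℝ) / 2) := by
  set K := ∫ y : ℝ, √|y| * ‖χ y‖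
  have hK : 0 ≤ K := integral_nonneg fun y => by positivity
  refine ⟨K / 2 + 1, by positivity, fun t ht u v => ?_⟩
  set M := √(∫ x, ‖galileanOp t u x‖ ^ 2)
  have hL2 : (∫ x : ℝ, ‖(x : ℂ) * u x + 2 * I * (t : ℂ) * deriv u x‖ ^ 2) ^ ((1 : ℝ) / 2) = M := by
    simp only [M, galileanOp_apply, Real.sqrt_eq_rpow]
  have hmoll := norm_sub_mollification_le_of_sqrt_holder (ψ := fun y => conj (χ y)) (v * t)
    (Real.sqrt_pos.2 ht) (u.continuous.mul (continuous_chirp t)) (norm_mul_chirp_sub_le ht u)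
    (Complex.conjCLE.toContinuousLinearMap.integrable_comp χ.integrable)
    (by simpa using χ.integrable_sqrt_abs_mul_norm) (by rw [integral_conj, hχ, map_one])
  simp only [RCLike.norm_conj] at hmoll
  rw [sub_rpow_mul_asymProfile_eq χ u ht v, norm_mul, norm_exp_I_mul_sq_div, one_mul, hL2]
  calc _ ≤ (2 * t)⁻¹ * M * √√t * K := hmoll
    _ = K / 2 * t ^ (-(3 / 4 : ℝ)) * M := by
        rw [mul_right_comm _ _ √√t, inv_two_mul_mul_sqrt_sqrt ht]; ring
    _ ≤ (K / 2 + 1) * t ^ (-(3 / 4 : ℝ)) * M := by gcongr; linarith
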